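/- arXiv:2008.08576 — 2 statements merged into one kernel-verified Lean document; each statement's English description precedes it below -/
import Mathlib

section
/- Let Γ_1, Γ_2, … be i.i.d. Gamma random variables with shape α > 0 and rate 1, and define C^α = (2/π²) Σ_{l=1}^∞ Γ_l/(l − 1/2)². Then for every b ≥ 0, E[exp(−b C^α)] = (cosh √(2b))^{−α}. -/
open MeasureTheory ProbabilityTheory Real

open MeasureTheory ProbabilityTheory Real Filter Set Finset

open Filter Finset

lemma prod_range_two_mul (f : ℕ → ℂ) (n : ℕ) :
    ∏ j ∈ Finset.range (2 * n), f j
      = (∏ k ∈ Finset.range n, f (2 * k)) * ∏ k ∈ Finset.range n, f (2 * k + 1) := by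
  induction n with
  | zero => simp
  | succ n ih =>
      rw [mul_add, mul_one, Finset.prod_range_succ, Finset.prod_range_succ,
        Finset.prod_range_succ (fun k => f (2 * k)) n, Finset.prod_range_succ
          (fun k => f (2 * k + 1)) n, ih]
      ring

lemma tendsto_cos_prod (z : ℂ) (hz : Complex.sin (Real.pi * z) ≠ 0) :
    Tendsto (fun n : ℕ => ∏ k ∈ Finset.range n, (1 - z ^ 2 / ((k : ℂ) + 1 / 2) ^ 2))
      atTop (nhds (Complex.cos (Real.pi * z))) := by
  have hA := Complex.tendsto_euler_sin_prod (2 * z)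
  have hB := Complex.tendsto_euler_sin_prod z
  have hA2 : Tendsto (fun n : ℕ => (Real.pi : ℂ) * (2 * z) *
      ∏ j ∈ Finset.range (2 * n), (1 - (2 * z) ^ 2 / ((j : ℂ) + 1) ^ 2))
      atTop (nhds (Complex.sin (Real.pi * (2 * z)))) :=
    hA.comp ((strictMono_mul_left_of_pos (show (0:ℕ) < 2 by norm_num)).tendsto_atTop)
  -- rewrite the 2n-product as product of even and odd factors
  have hsplit : ∀ n : ℕ, (Real.pi : ℂ) * (2 * z) *
      ∏ j ∈ Finset.range (2 * n), (1 - (2 * z) ^ 2 / ((j : ℂ) + 1) ^ 2)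
      = (2 * ((Real.pi : ℂ) * z * ∏ k ∈ Finset.range n, (1 - z ^ 2 / ((k : ℂ) + 1) ^ 2))) *
        ∏ k ∈ Finset.range n, (1 - z ^ 2 / ((k : ℂ) + 1 / 2) ^ 2) := by
    intro n
    rw [prod_range_two_mul (fun j => (1 - (2 * z) ^ 2 / ((j : ℂ) + 1) ^ 2)) n]
    have he : ∀ k : ℕ, (1 - (2 * z) ^ 2 / (((2 * k : ℕ) : ℂ) + 1) ^ 2)
        = 1 - z ^ 2 / ((k : ℂ) + 1 / 2) ^ 2 := by
      intro k
      have h1 : (((2 * k : ℕ) : ℂ) + 1) = 2 * ((k : ℂ) + 1 / 2) := by push_cast; ring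
      rw [h1]
      have h2 : ((k : ℂ) + 1 / 2) ≠ 0 := by
        intro h
        have := congrArg Complex.re h
        simp at this
        nlinarith [Nat.cast_nonneg (α := ℝ) k, this]
      field_simp
    have ho : ∀ k : ℕ, (1 - (2 * z) ^ 2 / (((2 * k + 1 : ℕ) : ℂ) + 1) ^ 2)
        = 1 - z ^ 2 / ((k : ℂ) + 1) ^ 2 := by
      intro k
      have h1 : (((2 * k + 1 : ℕ) : ℂ) + 1) = 2 * ((k : ℂ) + 1) := by push_cast; ring
      rw [h1]
      have h2 : ((k : ℂ) + 1) ≠ 0 := by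
        intro h
        have := congrArg Complex.re h
        simp at this
        nlinarith [Nat.cast_nonneg (α := ℝ) k, this]
      field_simp
    simp_rw [he, ho]
    ring
  simp_rw [hsplit] at hA2
  -- B n ≠ 0 eventually; divide
  have hBne : ∀ᶠ n in atTop, ((Real.pi : ℂ) * z *
      ∏ k ∈ Finset.range n, (1 - z ^ 2 / ((k : ℂ) + 1) ^ 2)) ≠ 0 :=
    hB.eventually_ne hz
  have hlim : Complex.sin ((Real.pi : ℂ) * (2 * z))
      = 2 * Complex.sin ((Real.pi : ℂ) * z) * Complex.cos ((Real.pi : ℂ) * z) := by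
    have := Complex.sin_two_mul ((Real.pi : ℂ) * z)
    rw [show (Real.pi : ℂ) * (2 * z) = 2 * ((Real.pi : ℂ) * z) by ring, this]
  have hdiv : Tendsto (fun n : ℕ =>
      ((2 * ((Real.pi : ℂ) * z * ∏ k ∈ Finset.range n, (1 - z ^ 2 / ((k : ℂ) + 1) ^ 2))) *
        ∏ k ∈ Finset.range n, (1 - z ^ 2 / ((k : ℂ) + 1 / 2) ^ 2)) /
      (2 * ((Real.pi : ℂ) * z * ∏ k ∈ Finset.range n, (1 - z ^ 2 / ((k : ℂ) + 1) ^ 2))))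
      atTop (nhds (Complex.sin ((Real.pi : ℂ) * (2 * z)) /
        (2 * Complex.sin ((Real.pi : ℂ) * z)))) :=
    hA2.div (hB.const_mul 2) (by simpa using hz)
  have heq : ∀ᶠ n in atTop,
      ((2 * ((Real.pi : ℂ) * z * ∏ k ∈ Finset.range n, (1 - z ^ 2 / ((k : ℂ) + 1) ^ 2))) *
        ∏ k ∈ Finset.range n, (1 - z ^ 2 / ((k : ℂ) + 1 / 2) ^ 2)) /
      (2 * ((Real.pi : ℂ) * z * ∏ k ∈ Finset.range n, (1 - z ^ 2 / ((k : ℂ) + 1) ^ 2)))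
      = ∏ k ∈ Finset.range n, (1 - z ^ 2 / ((k : ℂ) + 1 / 2) ^ 2) := by
    filter_upwards [hBne] with n hn
    rw [mul_comm, mul_div_assoc, div_self (by simpa using hn), mul_one]
  have := hdiv.congr' heq
  rwa [hlim, show 2 * Complex.sin ((Real.pi : ℂ) * z) * Complex.cos ((Real.pi : ℂ) * z) /
      (2 * Complex.sin ((Real.pi : ℂ) * z)) = Complex.cos ((Real.pi : ℂ) * z) by
    rw [mul_comm, mul_div_assoc, div_self (by simpa using hz), mul_one]] at this

lemma tendsto_prod_cosh {b : ℝ} (hb : 0 < b) :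
    Tendsto (fun n : ℕ => ∏ k ∈ Finset.range n,
        (1 + b * (2 / Real.pi ^ 2 / ((k : ℝ) + 1 / 2) ^ 2)))
      atTop (nhds (Real.cosh (Real.sqrt (2 * b)))) := by
  set z : ℂ := (Real.sqrt (2 * b) / Real.pi) * Complex.I with hzdef
  have hpi : (Real.pi : ℂ) ≠ 0 := by
    exact_mod_cast Complex.ofReal_ne_zero.mpr Real.pi_ne_zero
  have hpz : (Real.pi : ℂ) * z = (Real.sqrt (2 * b) : ℂ) * Complex.I := by
    rw [hzdef]; field_simp
  have hsq : (Real.sqrt (2 * b) : ℂ) ^ 2 = (2 * b : ℝ) := by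
    rw [← Complex.ofReal_pow, Real.sq_sqrt (by linarith)]
  have hsin : Complex.sin ((Real.pi : ℂ) * z) ≠ 0 := by
    rw [hpz, Complex.sin_mul_I]
    have h1 : Complex.sinh (Real.sqrt (2 * b)) = (Real.sinh (Real.sqrt (2 * b)) : ℂ) :=
      (Complex.ofReal_sinh _).symm
    rw [h1]
    simp only [mul_ne_zero_iff, Complex.I_ne_zero, and_true, ne_eq, Complex.ofReal_eq_zero]
    have : 0 < Real.sinh (Real.sqrt (2 * b)) := by
      rw [Real.sinh_pos_iff]
      exact Real.sqrt_pos.mpr (by linarith)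
    exact ⟨this.ne', not_false⟩
  have hcos : Complex.cos ((Real.pi : ℂ) * z) = (Real.cosh (Real.sqrt (2 * b)) : ℂ) := by
    rw [hpz, Complex.cos_mul_I, Complex.ofReal_cosh]
  have hfac : ∀ k : ℕ, (1 - z ^ 2 / ((k : ℂ) + 1 / 2) ^ 2)
      = ((1 + b * (2 / Real.pi ^ 2 / ((k : ℝ) + 1 / 2) ^ 2) : ℝ) : ℂ) := by
    intro k
    have hz2 : z ^ 2 = -((2 * b / Real.pi ^ 2 : ℝ) : ℂ) := by
      rw [hzdef, mul_pow, Complex.I_sq, div_pow, hsq]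
      push_cast
      ring
    have hk : ((k : ℂ) + 1 / 2) ^ 2 = (((k : ℝ) + 1 / 2) ^ 2 : ℝ) := by push_cast; ring
    have hkne : (((k : ℝ) + 1 / 2) ^ 2 : ℝ) ≠ 0 := by positivity
    rw [hz2, hk]
    rw [show -((2 * b / Real.pi ^ 2 : ℝ) : ℂ) / ((((k : ℝ) + 1 / 2) ^ 2 : ℝ) : ℂ)
        = -(((2 * b / Real.pi ^ 2 / ((k : ℝ) + 1 / 2) ^ 2 : ℝ)) : ℂ) by
      push_cast; ring]
    push_cast
    have : (Real.pi : ℂ) ^ 2 ≠ 0 := pow_ne_zero _ hpi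
    have h2 : (((k : ℝ) + 1 / 2 : ℝ) : ℂ) ≠ 0 := by
      exact_mod_cast (show ((k : ℝ) + 1 / 2) ≠ 0 by positivity)
    field_simp
    ring
  have h := tendsto_cos_prod z hsin
  simp_rw [hfac, ← Complex.ofReal_prod, hcos] at h
  have h2 := (Complex.continuous_re.tendsto _).comp h
  simp only [Function.comp_def, Complex.ofReal_re] at h2
  exact h2

open MeasureTheory ProbabilityTheory Real Filter Set

lemma gamma_laplace {α : ℝ} (hα : 0 < α) {c : ℝ} (hc : 0 ≤ c) :
    ∫ x, Real.exp (-(c * x)) ∂(gammaMeasure α 1) = (1 + c) ^ (-α) := by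
  have h1c : (0:ℝ) < 1 + c := by linarith
  have hGam : (0:ℝ) < Real.Gamma α := Real.Gamma_pos_of_pos hα
  have hmeasf : Measurable fun x : ℝ => Real.exp (-(c * x)) :=
    ((measurable_id.const_mul c).neg).exp
  set g : ℝ → ℝ := fun x => (1 / Real.Gamma α) * (x ^ (α - 1) * Real.exp (-((1 + c) * x)))
    with hg
  have hgmeas : Measurable g := by
    rw [hg]; fun_prop
  have hInt : IntegrableOn g (Ici 0) := by
    rw [integrableOn_Ici_iff_integrableOn_Ioi]
    apply Integrable.const_mul
    have base := Real.GammaIntegral_convergent hα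
    refine Integrable.mono base ?_ ?_
    · have heq : (fun x : ℝ => x ^ (α - 1) * Real.exp (-((1 + c) * x)))
          = fun x => Real.Gamma α * g x := by
        funext x; rw [hg]; field_simp
      rw [heq]
      exact ((hgmeas.const_mul _).aestronglyMeasurable).restrict
    · rw [ae_restrict_iff' measurableSet_Ioi]
      filter_upwards with x hx
      have hx0 : (0:ℝ) < x := hx
      have h1 : 0 ≤ x ^ (α - 1) := Real.rpow_nonneg hx0.le _
      rw [Real.norm_eq_abs, Real.norm_eq_abs, abs_of_nonneg (by positivity),
        abs_of_nonneg (by positivity)]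
      have : Real.exp (-((1 + c) * x)) ≤ Real.exp (-x) := by
        apply Real.exp_le_exp.mpr
        nlinarith
      calc x ^ (α - 1) * Real.exp (-((1 + c) * x)) ≤ x ^ (α - 1) * Real.exp (-x) :=
            mul_le_mul_of_nonneg_left this h1
        _ = Real.exp (-x) * x ^ (α - 1) := mul_comm _ _
  have hgnn : ∀ x : ℝ, 0 ≤ x → 0 ≤ g x := by
    intro x hx
    have h1 : 0 ≤ x ^ (α - 1) := Real.rpow_nonneg hx _
    have := Real.exp_pos (-((1 + c) * x))
    positivity
  have hval : ∫ x in Ici (0:ℝ), g x = (1 + c) ^ (-α) := by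
    rw [MeasureTheory.integral_Ici_eq_integral_Ioi, hg]
    rw [MeasureTheory.integral_const_mul, integral_rpow_mul_exp_neg_mul_Ioi hα h1c]
    rw [one_div ((1:ℝ)+c), Real.inv_rpow h1c.le, ← Real.rpow_neg h1c.le]
    field_simp
  -- now the lintegral computation
  rw [gammaMeasure, integral_eq_lintegral_of_nonneg_ae
      (ae_of_all _ fun x => (Real.exp_pos _).le) hmeasf.aestronglyMeasurable]
  have hpdfmeas : Measurable (gammaPDF α 1) := (measurable_gammaPDFReal α 1).ennreal_ofReal
  rw [lintegral_withDensity_eq_lintegral_mul _ hpdfmeas hmeasf.ennreal_ofReal]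
  have hsplit := lintegral_add_compl
    (fun x => (gammaPDF α 1 * fun x => ENNReal.ofReal (Real.exp (-(c * x)))) x)
    (measurableSet_Ici (a := (0:ℝ))) (μ := volume)
  rw [show (fun x => (gammaPDF α 1 * fun x => ENNReal.ofReal (Real.exp (-(c * x)))) x)
      = (gammaPDF α 1 * fun x => ENNReal.ofReal (Real.exp (-(c * x)))) from rfl] at hsplit
  rw [← hsplit, compl_Ici]
  have hIio : ∫⁻ x in Iio (0:ℝ),
      (gammaPDF α 1 * fun x => ENNReal.ofReal (Real.exp (-(c * x)))) x = 0 := by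
    rw [setLIntegral_congr_fun (g := fun _ => 0) measurableSet_Iio]
    · simp
    · intro x hx
      have : gammaPDF α 1 x = 0 := gammaPDF_of_neg hx
      simp [this]
  have hIci : ∫⁻ x in Ici (0:ℝ),
      (gammaPDF α 1 * fun x => ENNReal.ofReal (Real.exp (-(c * x)))) x
      = ENNReal.ofReal ((1 + c) ^ (-α)) := by
    rw [setLIntegral_congr_fun (g := fun x => ENNReal.ofReal (g x)) measurableSet_Ici]
    · rw [← MeasureTheory.ofReal_integral_eq_lintegral_ofReal hInt]
      · rw [hval]
      · rw [EventuallyLE, ae_restrict_iff' measurableSet_Ici]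
        filter_upwards with x hx
        exact hgnn x hx
    · intro x hx
      simp only [Pi.mul_apply]
      have h1 : (0:ℝ) ≤ x ^ (α - 1) := Real.rpow_nonneg hx _
      rw [gammaPDF_of_nonneg hx, ← ENNReal.ofReal_mul (by positivity)]
      · congr 1
        rw [hg]
        simp only [Real.one_rpow, one_div]
        rw [mul_comm (1+c) x, show -(x*(1+c)) = -(1*x) + -(c*x) by ring, Real.exp_add]
        ring
  rw [hIci, hIio, add_zero, ENNReal.toReal_ofReal (Real.rpow_nonneg h1c.le _)]

open MeasureTheory ProbabilityTheory Real Filter Set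

lemma gamma_mean_lt_top {α : ℝ} (hα : 0 < α) :
    ∫⁻ x, ENNReal.ofReal x ∂(gammaMeasure α 1) < ⊤ := by
  have hGam : (0:ℝ) < Real.Gamma α := Real.Gamma_pos_of_pos hα
  have hpdfmeas : Measurable (gammaPDF α 1) := (measurable_gammaPDFReal α 1).ennreal_ofReal
  rw [gammaMeasure, lintegral_withDensity_eq_lintegral_mul _ hpdfmeas ENNReal.measurable_ofReal]
  rw [← lintegral_add_compl
      (fun x => (gammaPDF α 1 * fun x => ENNReal.ofReal x) x)
      (measurableSet_Ici (a := (0:ℝ))), compl_Ici]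
  have hIio : ∫⁻ x in Iio (0:ℝ), (gammaPDF α 1 * fun x => ENNReal.ofReal x) x = 0 := by
    rw [setLIntegral_congr_fun (g := fun _ => 0) measurableSet_Iio]
    · simp
    · intro x hx
      have : gammaPDF α 1 x = 0 := gammaPDF_of_neg hx
      simp [this]
  rw [hIio, add_zero]
  rw [← setLIntegral_congr (MeasureTheory.Ioi_ae_eq_Ici (a := (0:ℝ)))]
  set h : ℝ → ℝ := fun x => (1 / Real.Gamma α) * (x ^ ((α + 1) - 1) * Real.exp (-x)) with hh
  have hcongr : ∫⁻ x in Ioi (0:ℝ), (gammaPDF α 1 * fun x => ENNReal.ofReal x) x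
      = ∫⁻ x in Ioi (0:ℝ), ENNReal.ofReal (h x) := by
    apply setLIntegral_congr_fun measurableSet_Ioi
    intro x hx
    have hx0 : (0:ℝ) < x := hx
    have h1 : (0:ℝ) ≤ x ^ (α - 1) := Real.rpow_nonneg hx0.le _
    simp only [Pi.mul_apply]
    rw [gammaPDF_of_nonneg hx0.le, ← ENNReal.ofReal_mul (by positivity)]
    congr 1
    rw [hh]
    simp only [Real.one_rpow, one_div, one_mul]
    rw [show (α + 1) - 1 = (α - 1) + 1 by ring, Real.rpow_add hx0, Real.rpow_one]
    ring
  rw [hcongr]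
  have hInt : IntegrableOn h (Ioi 0) := by
    apply Integrable.const_mul
    have base := Real.GammaIntegral_convergent (show (0:ℝ) < α + 1 by linarith)
    have heq : (fun x : ℝ => x ^ ((α + 1) - 1) * Real.exp (-x))
        = fun x => Real.exp (-x) * x ^ ((α + 1) - 1) := by
      funext x; ring
    rw [heq]
    exact base
  rw [← MeasureTheory.ofReal_integral_eq_lintegral_ofReal hInt]
  · exact ENNReal.ofReal_lt_top
  · rw [EventuallyLE, ae_restrict_iff' measurableSet_Ioi]
    filter_upwards with x hx
    have hx0 : (0:ℝ) < x := hx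
    have h1 : (0:ℝ) ≤ x ^ ((α + 1) - 1) := Real.rpow_nonneg hx0.le _
    have := Real.exp_pos (-x)
    rw [hh]
    positivity



/-- Let `Γ_1, Γ_2, …` be i.i.d. `Gamma(α, 1)` random variables with `α > 0` and
`C^α = (2/π²) Σ_{l=1}^∞ Γ_l / (l − 1/2)²`. Then for every `b ≥ 0`,
`E[exp(−b C^α)] = (cosh √(2b))^(−α)`. -/
theorem laplace_transform_C
    {Ω : Type*} [MeasurableSpace Ω] (μ : Measure Ω) [IsProbabilityMeasure μ]
    (α : ℝ) (hα : 0 < α)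
    (G : ℕ → Ω → ℝ) (hmeas : ∀ l, Measurable (G l))
    (hindep : iIndepFun G μ)
    (hdist : ∀ l, Measure.map (G l) μ = gammaMeasure α 1)
    (C : Ω → ℝ)
    (hC : ∀ ω, C ω = (2 / Real.pi ^ 2) * ∑' l : ℕ, G l ω / ((l : ℝ) + 1 - 1 / 2) ^ 2) :
    ∀ b : ℝ, 0 ≤ b →
      ∫ ω, Real.exp (-b * C ω) ∂μ =
        (Real.cosh (Real.sqrt (2 * b))) ^ (-α) := by

  intro b hb
  rcases eq_or_lt_of_le hb with hb0 | hb0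
  · subst hb0
    simp [Real.one_rpow]
  -- coefficients
  set c : ℕ → ℝ := fun l => 2 / Real.pi ^ 2 / ((l : ℝ) + 1 / 2) ^ 2 with hcdef
  have hπ : (0:ℝ) < Real.pi ^ 2 := by positivity
  have hcpos : ∀ l, 0 < c l := fun l => by rw [hcdef]; positivity
  have hCY : ∀ ω, C ω = ∑' l, c l * G l ω := by
    intro ω
    rw [hC ω, ← tsum_mul_left]
    refine tsum_congr fun l => ?_
    rw [hcdef]
    have h : ((l:ℝ) + 1 - 1/2) = (l:ℝ) + 1/2 := by ring
    rw [h]; ring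
  have hsum_c : Summable c := by
    have h1 : Summable (fun l : ℕ => 4 / ((l:ℝ) + 1) ^ 2) := by
      have h2 : Summable (fun l : ℕ => 1 / ((l:ℝ)) ^ 2) :=
        summable_one_div_nat_pow.mpr one_lt_two
      have h3 := (summable_nat_add_iff 1).mpr h2
      have h4 : (fun l : ℕ => 4 / ((l:ℝ) + 1) ^ 2)
          = fun l : ℕ => 4 * (1 / (((l + 1 : ℕ)):ℝ) ^ 2) := by
        funext l; push_cast; ring
      rw [h4]
      exact h3.mul_left 4
    refine Summable.of_nonneg_of_le (fun l => (hcpos l).le) (fun l => ?_) h1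
    show 2 / Real.pi ^ 2 / ((l:ℝ) + 1 / 2) ^ 2 ≤ 4 / ((l:ℝ) + 1) ^ 2
    have hl0 : (0:ℝ) ≤ (l:ℝ) := Nat.cast_nonneg l
    have hd1 : (0:ℝ) < ((l:ℝ) + 1/2) ^ 2 := by positivity
    have hd2 : (0:ℝ) < ((l:ℝ) + 1) ^ 2 := by positivity
    rw [div_div, div_le_div_iff₀ (by positivity) hd2]
    have hpi9 : (9:ℝ) < Real.pi ^ 2 := by nlinarith [Real.pi_gt_three]
    nlinarith [mul_le_mul_of_nonneg_right hpi9.le hd1.le, hl0, sq_nonneg ((l:ℝ))]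
  -- the random variables Y l
  have hYmeas : ∀ l, Measurable (fun ω => c l * G l ω) := fun l => (hmeas l).const_mul _
  have hYindep : iIndepFun (fun l ω => c l * G l ω) μ :=
    hindep.comp (fun l x => c l * x) (fun l => measurable_id.const_mul _)
  -- a.e. nonnegativity
  have hGnn : ∀ᵐ ω ∂μ, ∀ l, 0 ≤ G l ω := by
    rw [ae_all_iff]
    intro l
    have hnull : μ (G l ⁻¹' (Set.Iio 0)) = 0 := by
      rw [← Measure.map_apply (hmeas l) measurableSet_Iio, hdist l, gammaMeasure,
        withDensity_apply _ measurableSet_Iio, lintegral_gammaPDF_of_nonpos le_rfl]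
    rw [ae_iff]
    simpa [Set.preimage, Set.Iio, not_le] using hnull
  -- a.e. summability
  have hsum_ae : ∀ᵐ ω ∂μ, Summable fun l => c l * G l ω := by
    have hmeasE : ∀ l, Measurable fun ω => ENNReal.ofReal (c l * G l ω) :=
      fun l => (hYmeas l).ennreal_ofReal
    have hlt : ∫⁻ ω, ∑' l, ENNReal.ofReal (c l * G l ω) ∂μ < ⊤ := by
      rw [lintegral_tsum (fun l => (hmeasE l).aemeasurable)]
      have heach : ∀ l, ∫⁻ ω, ENNReal.ofReal (c l * G l ω) ∂μ
          = ENNReal.ofReal (c l) * ∫⁻ x, ENNReal.ofReal x ∂(gammaMeasure α 1) := by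
        intro l
        have h1 : ∀ ω, ENNReal.ofReal (c l * G l ω)
            = ENNReal.ofReal (c l) * ENNReal.ofReal (G l ω) :=
          fun ω => ENNReal.ofReal_mul (hcpos l).le
        simp_rw [h1]
        rw [lintegral_const_mul _ ((hmeas l).ennreal_ofReal)]
        congr 1
        rw [← hdist l, lintegral_map ENNReal.measurable_ofReal (hmeas l)]
      rw [tsum_congr heach, ENNReal.tsum_mul_right]
      have h2 : ∑' l, ENNReal.ofReal (c l) < ⊤ := by
        rw [← ENNReal.ofReal_tsum_of_nonneg (fun l => (hcpos l).le) hsum_c]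
        exact ENNReal.ofReal_lt_top
      exact ENNReal.mul_lt_top h2 (gamma_mean_lt_top hα)
    have hae1 := ae_lt_top (Measurable.ennreal_tsum hmeasE) hlt.ne
    filter_upwards [hae1, hGnn] with ω hω hωnn
    have hs := ENNReal.summable_toReal hω.ne
    exact hs.congr fun l => ENNReal.toReal_ofReal (mul_nonneg (hcpos l).le (hωnn l))
  -- Step A : value for partial sums
  have hA : ∀ n : ℕ, ∫ ω, Real.exp (-b * ∑ l ∈ Finset.range n, c l * G l ω) ∂μ
      = ∏ l ∈ Finset.range n, (1 + b * c l) ^ (-α) := by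
    intro n
    have hmgf := iIndepFun.mgf_sum (t := -b) hYindep hYmeas (Finset.range n)
    have hterm : ∀ l, mgf (fun ω => c l * G l ω) μ (-b) = (1 + b * c l) ^ (-α) := by
      intro l
      rw [mgf]
      calc (∫ ω, Real.exp (-b * (c l * G l ω)) ∂μ)
          = ∫ ω, (fun x => Real.exp (-((b * c l) * x))) (G l ω) ∂μ := by
            congr 1; funext ω; congr 1; ring
        _ = ∫ x, Real.exp (-((b * c l) * x)) ∂(Measure.map (G l) μ) :=
            (integral_map (hmeas l).aemeasurable
              (((measurable_id.const_mul (b * c l)).neg.exp).aestronglyMeasurable)).symm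
        _ = (1 + b * c l) ^ (-α) := by
            rw [hdist l]; exact gamma_laplace hα (mul_nonneg hb (hcpos l).le)
    have hLHS : (∫ ω, Real.exp (-b * ∑ l ∈ Finset.range n, c l * G l ω) ∂μ)
        = mgf (∑ l ∈ Finset.range n, fun ω => c l * G l ω) μ (-b) := by
      rw [mgf]
      congr 1; funext ω
      simp [Finset.sum_apply]
    rw [hLHS, hmgf]
    exact Finset.prod_congr rfl fun l _ => hterm l
  -- Step B : dominated convergence
  have hB : Tendsto (fun n : ℕ => ∫ ω, Real.exp (-b * ∑ l ∈ Finset.range n, c l * G l ω) ∂μ)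
      atTop (nhds (∫ ω, Real.exp (-b * C ω) ∂μ)) := by
    refine MeasureTheory.tendsto_integral_of_dominated_convergence (fun _ => (1:ℝ))
      (fun n => ?_) (integrable_const 1) (fun n => ?_) ?_
    · exact (Measurable.exp ((Finset.measurable_sum (Finset.range n)
        (fun l _ => hYmeas l)).const_mul (-b))).aestronglyMeasurable
    · filter_upwards [hGnn] with ω hω
      have hsnn : 0 ≤ ∑ l ∈ Finset.range n, c l * G l ω :=
        Finset.sum_nonneg fun l _ => mul_nonneg (hcpos l).le (hω l)
      rw [Real.norm_eq_abs, Real.abs_exp, Real.exp_le_one_iff]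
      nlinarith
    · filter_upwards [hsum_ae] with ω hω
      have h1 : Tendsto (fun n : ℕ => ∑ l ∈ Finset.range n, c l * G l ω) atTop
          (nhds (∑' l, c l * G l ω)) := hω.hasSum.tendsto_sum_nat
      have hcont : Continuous fun x : ℝ => Real.exp (-b * x) := by fun_prop
      have h2 := (hcont.tendsto _).comp h1
      rw [hCY ω]
      exact h2
  -- Step C : the product converges to cosh
  have hcosh_pos : 0 < Real.cosh (Real.sqrt (2 * b)) := Real.cosh_pos _
  have hprod := tendsto_prod_cosh hb0
  have hC2 : Tendsto (fun n : ℕ => ∏ l ∈ Finset.range n, (1 + b * c l) ^ (-α)) atTop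
      (nhds ((Real.cosh (Real.sqrt (2 * b))) ^ (-α))) := by
    have h3 := hprod.rpow_const (p := -α) (Or.inl hcosh_pos.ne')
    refine h3.congr fun n => ?_
    exact (Real.finset_prod_rpow (Finset.range n) (fun l => 1 + b * c l)
      (fun l _ => by have := hcpos l; show (0:ℝ) ≤ 1 + b * c l; nlinarith) (-α)).symm
  have hC3 : Tendsto (fun n : ℕ => ∫ ω, Real.exp (-b * ∑ l ∈ Finset.range n, c l * G l ω) ∂μ)
      atTop (nhds ((Real.cosh (Real.sqrt (2 * b))) ^ (-α))) := by
    refine hC2.congr fun n => (hA n).symm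
  exact tendsto_nhds_unique hB hC3
end

section
/- Let τ > 0, δ > 0, and for n = 1, 2, … let C_n be independent random variables each with Laplace transform (cosh √(2b))^{−δ/2}. Then X_2 = Σ_{n=1}^∞ (τ²/4^n) C_n has Laplace transform E[exp(−bX_2)] = (√(2b)τ / sinh(√(2b)τ))^{δ/2} for b > 0. -/
open MeasureTheory ProbabilityTheory Real
open Filter

lemma aux_sinh_div : Filter.Tendsto (fun x : ℝ => Real.sinh x / x) (nhdsWithin 0 {0}ᶜ) (nhds 1) := by
  have h := (Real.hasDerivAt_sinh 0)
  rw [hasDerivAt_iff_tendsto_slope] at h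
  simp only [Real.cosh_zero] at h
  refine h.congr' ?_
  filter_upwards [self_mem_nhdsWithin] with x hx
  simp [slope_def_field, Real.sinh_zero]

lemma aux_cosh_prod_eq (s : ℝ) (N : ℕ) :
    (2:ℝ)^N * Real.sinh (s / 2^N) * ∏ j ∈ Finset.range N, Real.cosh (s / 2^(j+1))
      = Real.sinh s := by
  induction N with
  | zero => simp
  | succ N ih =>
    rw [Finset.prod_range_succ]
    have h2 : s / 2^N = 2 * (s / 2^(N+1)) := by rw [pow_succ]; ring
    rw [← ih, h2, Real.sinh_two_mul, pow_succ]
    ring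

lemma aux_cosh_prod_tendsto (s : ℝ) (hs : 0 < s) :
    Filter.Tendsto (fun N => ∏ j ∈ Finset.range N, Real.cosh (s / 2^(j+1))) atTop
      (nhds (Real.sinh s / s)) := by
  have hx : Filter.Tendsto (fun N : ℕ => s / 2^N) atTop (nhdsWithin 0 {0}ᶜ) := by
    apply tendsto_nhdsWithin_of_tendsto_nhds_of_eventually_within
    · have : Filter.Tendsto (fun N : ℕ => ((1:ℝ)/2)^N) atTop (nhds 0) :=
        tendsto_pow_atTop_nhds_zero_of_lt_one (by norm_num) (by norm_num)
      have := this.const_mul s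
      simpa [div_eq_mul_inv, mul_pow, inv_pow, mul_zero] using this
    · filter_upwards with N
      have : (0:ℝ) < s / 2^N := by positivity
      simp [this.ne']
  have ht : Filter.Tendsto (fun N : ℕ => (2:ℝ)^N * Real.sinh (s / 2^N)) atTop (nhds s) := by
    have h1 := aux_sinh_div.comp hx
    have h2 := h1.const_mul s
    simp only [mul_one] at h2
    refine h2.congr ?_
    intro N
    have hN : (0:ℝ) < (2:ℝ)^N := by positivity
    rw [Function.comp_apply]
    field_simp [hs.ne']
  have heq : ∀ N, (∏ j ∈ Finset.range N, Real.cosh (s / 2^(j+1)))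
      = Real.sinh s / ((2:ℝ)^N * Real.sinh (s / 2^N)) := by
    intro N
    have hne : (2:ℝ)^N * Real.sinh (s / 2^N) ≠ 0 := by
      have h1 : (0:ℝ) < Real.sinh (s / 2^N) := Real.sinh_pos_iff.2 (by positivity)
      positivity
    rw [eq_div_iff hne]
    rw [← aux_cosh_prod_eq s N]; ring
  simp only [heq]
  exact (tendsto_const_nhds (x := Real.sinh s)).div ht hs.ne'

lemma aux_integrable {Ω : Type*} [MeasurableSpace Ω] (μ : Measure Ω) [IsProbabilityMeasure μ]
    (δ : ℝ) (X : Ω → ℝ)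
    (hL : ∀ b : ℝ, 0 < b → ∫ ω, Real.exp (-b * X ω) ∂μ = (Real.cosh (Real.sqrt (2*b)))^(-(δ/2))) :
    ∀ b : ℝ, 0 < b → Integrable (fun ω => Real.exp (-b * X ω)) μ := by
  intro b hb
  by_contra h
  have h0 := integral_undef h
  rw [hL b hb] at h0
  exact (Real.rpow_pos_of_pos (lt_of_lt_of_le one_pos (Real.one_le_cosh _)) _).ne' h0

lemma aux_nonneg {Ω : Type*} [MeasurableSpace Ω] (μ : Measure Ω) [IsProbabilityMeasure μ]
    (δ : ℝ) (hδ : 0 < δ) (X : Ω → ℝ) (hX : Measurable X)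
    (hL : ∀ b : ℝ, 0 < b → ∫ ω, Real.exp (-b * X ω) ∂μ = (Real.cosh (Real.sqrt (2*b)))^(-(δ/2))) :
    ∀ᵐ ω ∂μ, 0 ≤ X ω := by
  have hInt := aux_integrable μ δ X hL
  have hsets : ∀ ε : ℝ, 0 < ε → μ {ω | X ω ≤ -ε} = 0 := by
    intro ε hε
    set A := {ω | X ω ≤ -ε} with hA
    have hAm : MeasurableSet A := measurableSet_le hX measurable_const
    have hbound : ∀ c : ℝ, 0 < c → (μ A).toReal ≤ Real.exp (-(c*ε)) := by
      intro c hc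
      have h1 : Real.exp (c*ε) * (μ A).toReal ≤ ∫ ω in A, Real.exp (-c * X ω) ∂μ := by
        rw [← measureReal_def]
        refine setIntegral_ge_of_const_le_real hAm (measure_ne_top μ _) (fun x hx => ?_)
          (hInt c hc).integrableOn
        have hx' : X x ≤ -ε := hx
        exact Real.exp_le_exp.2 (by nlinarith)
      have h2 : ∫ ω in A, Real.exp (-c * X ω) ∂μ ≤ ∫ ω, Real.exp (-c * X ω) ∂μ :=
        setIntegral_le_integral (hInt c hc) (Filter.Eventually.of_forall fun ω => (Real.exp_pos _).le)
      have h3 : ∫ ω, Real.exp (-c * X ω) ∂μ ≤ 1 := by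
        rw [hL c hc]
        exact Real.rpow_le_one_of_one_le_of_nonpos (Real.one_le_cosh _) (by linarith)
      have h4 : Real.exp (c*ε) * (μ A).toReal ≤ 1 := le_trans h1 (le_trans h2 h3)
      have h5 : (μ A).toReal ≤ 1 / Real.exp (c*ε) := by
        rw [le_div_iff₀ (Real.exp_pos _)]; linarith [h4]
      simpa [Real.exp_neg, one_div] using h5
    have hlim : Filter.Tendsto (fun k : ℕ => Real.exp (-((k+1)*ε))) Filter.atTop (nhds 0) := by
      apply Real.tendsto_exp_atBot.comp
      rw [Filter.tendsto_neg_atBot_iff]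
      exact Filter.Tendsto.atTop_mul_const hε (Filter.tendsto_atTop_add_const_right _ 1 tendsto_natCast_atTop_atTop)
    have hle : (μ A).toReal ≤ 0 :=
      ge_of_tendsto' hlim (fun k => hbound ((k:ℝ)+1) (by positivity))
    have : (μ A).toReal = 0 := le_antisymm hle ENNReal.toReal_nonneg
    exact (ENNReal.toReal_eq_zero_iff _).1 this |>.resolve_right (measure_ne_top μ _)
  have hsub : {ω | X ω < 0} ⊆ ⋃ k : ℕ, {ω | X ω ≤ -(1/(k+1))} := by
    intro ω hω
    have hx : (0:ℝ) < -X ω := by simpa using hω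
    obtain ⟨k, hk⟩ := exists_nat_gt (1 / (-X ω))
    refine Set.mem_iUnion.2 ⟨k, ?_⟩
    have hk1 : 1 / (-X ω) < (k:ℝ)+1 := hk.trans_le (by linarith)
    have : (1:ℝ)/((k:ℝ)+1) < -X ω := by
      rw [div_lt_iff₀ (by positivity)]
      rw [div_lt_iff₀ hx] at hk1
      nlinarith
    simp only [Set.mem_setOf_eq]
    linarith
  have hnull : μ {ω | X ω < 0} = 0 :=
    measure_mono_null hsub (measure_iUnion_null fun k => hsets _ (by positivity))
  rw [ae_iff]
  simpa using hnull

lemma aux_integral_prod {Ω : Type*} [MeasurableSpace Ω] {μ : Measure Ω} [IsProbabilityMeasure μ]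
    (g : ℕ → Ω → ℝ) (hg : iIndepFun g μ)
    (hmeas : ∀ m, Measurable (g m)) (hnn : ∀ m ω, 0 ≤ g m ω) :
    ∀ N, ∫ ω, ∏ j ∈ Finset.range N, g (j+1) ω ∂μ
        = ∏ j ∈ Finset.range N, ∫ ω, g (j+1) ω ∂μ := by
  intro N
  induction N with
  | zero => simp
  | succ N ih =>
    have hs : IndepFun (∏ j ∈ (Finset.range N).image (·+1), g j) (g (N+1)) μ :=
      hg.indepFun_finsetProd_of_notMem hmeas (by simp)
    have hfun : (∏ j ∈ (Finset.range N).image (·+1), g j)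
        = fun ω => ∏ j ∈ Finset.range N, g (j+1) ω := by
      funext ω
      rw [Finset.prod_apply, Finset.prod_image (fun x _ y _ h => by omega)]
    rw [hfun] at hs
    have hpm : Measurable (fun ω => ∏ j ∈ Finset.range N, g (j+1) ω) :=
      Finset.measurable_prod _ (fun j _ => hmeas _)
    have := hs.integral_mul_eq_mul_integral
      hpm.aestronglyMeasurable (hmeas _).aestronglyMeasurable
    simp only [Finset.prod_range_succ]
    calc ∫ ω, (∏ j ∈ Finset.range N, g (j+1) ω) * g (N+1) ω ∂μ
        = ∫ ω, ((fun ω => ∏ j ∈ Finset.range N, g (j+1) ω) * g (N+1)) ω ∂μ := by rfl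
      _ = (∫ ω, ∏ j ∈ Finset.range N, g (j+1) ω ∂μ) * ∫ ω, g (N+1) ω ∂μ := this
      _ = (∏ j ∈ Finset.range N, ∫ ω, g (j+1) ω ∂μ) * ∫ ω, g (N+1) ω ∂μ := by rw [ih]


/-- Laplace transform of `X₂ = Σ_{n=1}^∞ (τ²/4ⁿ) Cₙ` where the `Cₙ` are
independent random variables each with Laplace transform `(cosh √(2b))^(−δ/2)`:
`E[exp(−bX₂)] = (√(2b)τ / sinh(√(2b)τ))^(δ/2)` for `b > 0`. -/
theorem laplace_transform_X2
    {Ω : Type*} [MeasurableSpace Ω] (μ : Measure Ω) [IsProbabilityMeasure μ]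
    (τ δ : ℝ) (hτ : 0 < τ) (hδ : 0 < δ)
    (C : ℕ → Ω → ℝ) (hCmeas : ∀ n, Measurable (C n))
    (hindep : iIndepFun C μ)
    (hCLaplace : ∀ n, ∀ b : ℝ, 0 < b →
      ∫ ω, Real.exp (-b * C n ω) ∂μ =
        (Real.cosh (Real.sqrt (2 * b))) ^ (-(δ / 2)))
    (X2 : Ω → ℝ)
    (hX2 : ∀ ω, X2 ω = ∑' n : ℕ, (τ ^ 2 / 4 ^ (n + 1)) * C (n + 1) ω) :
    ∀ b : ℝ, 0 < b →
      ∫ ω, Real.exp (-b * X2 ω) ∂μ =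
        (Real.sqrt (2 * b) * τ / Real.sinh (Real.sqrt (2 * b) * τ)) ^ (δ / 2) := by
  -- setup
  set Y : ℕ → Ω → ℝ := fun j ω => (τ ^ 2 / 4 ^ (j + 1)) * C (j + 1) ω with hY
  set S : ℕ → Ω → ℝ := fun N ω => ∑ j ∈ Finset.range N, Y j ω with hS
  have hYmeas : ∀ j, Measurable (Y j) := fun j => (hCmeas _).const_mul _
  have hSmeas : ∀ N, Measurable (S N) := fun N => Finset.measurable_sum _ (fun j _ => hYmeas j)
  -- a.e. nonnegativity
  have hYnonneg : ∀ᵐ ω ∂μ, ∀ j, 0 ≤ Y j ω := by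
    rw [ae_all_iff]
    intro j
    filter_upwards [aux_nonneg μ δ hδ (C (j+1)) (hCmeas _) (hCLaplace (j+1))] with ω hω
    have : (0:ℝ) < τ ^ 2 / 4 ^ (j + 1) := by positivity
    exact mul_nonneg this.le hω
  have hSnonneg : ∀ᵐ ω ∂μ, ∀ N, 0 ≤ S N ω := by
    filter_upwards [hYnonneg] with ω hω N
    exact Finset.sum_nonneg fun j _ => hω j
  have hSmono : ∀ ω, (∀ j, 0 ≤ Y j ω) → Monotone (fun N => S N ω) := by
    intro ω hω
    apply monotone_nat_of_le_succ
    intro N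
    simp only [hS, Finset.sum_range_succ]
    linarith [hω N]
  -- the Laplace transform of the partial sums
  have hprod : ∀ c : ℝ, 0 < c → ∀ N, ∫ ω, Real.exp (-c * S N ω) ∂μ
      = ∏ j ∈ Finset.range N,
          Real.cosh (Real.sqrt (2*c) * τ / 2^(j+1)) ^ (-(δ/2)) := by
    intro c hc N
    set g : ℕ → Ω → ℝ := fun m ω => Real.exp (-(c * (τ^2/4^m)) * C m ω) with hg
    have hgmeas : ∀ m, Measurable (g m) :=
      fun m => (Real.measurable_exp.comp ((hCmeas m).const_mul _))
    have hgindep : iIndepFun g μ :=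
      hindep.comp (fun m x => Real.exp (-(c * (τ^2/4^m)) * x))
        (fun m => Real.measurable_exp.comp (measurable_id.const_mul _))
    have h1 : ∀ ω, Real.exp (-c * S N ω) = ∏ j ∈ Finset.range N, g (j+1) ω := by
      intro ω
      have : -c * S N ω = ∑ j ∈ Finset.range N, -(c * (τ^2/4^(j+1))) * C (j+1) ω := by
        simp only [hS, hY, Finset.mul_sum]
        exact Finset.sum_congr rfl fun j _ => by ring
      rw [this, Real.exp_sum]
    have h2 : ∫ ω, Real.exp (-c * S N ω) ∂μ = ∏ j ∈ Finset.range N, ∫ ω, g (j+1) ω ∂μ := by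
      rw [show (fun ω => Real.exp (-c * S N ω)) = fun ω => ∏ j ∈ Finset.range N, g (j+1) ω from funext h1]
      exact aux_integral_prod g hgindep hgmeas (fun m ω => (Real.exp_pos _).le) N
    rw [h2]
    refine Finset.prod_congr rfl fun j _ => ?_
    have hb' : 0 < c * (τ^2/4^(j+1)) := by positivity
    have h3 := hCLaplace (j+1) (c * (τ^2/4^(j+1))) hb'
    have hsq : Real.sqrt (2 * (c * (τ^2/4^(j+1)))) = Real.sqrt (2*c) * τ / 2^(j+1) := by
      have e1 : (Real.sqrt (2*c) * τ / 2^(j+1))^2 = 2 * (c * (τ^2/4^(j+1))) := by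
        rw [div_pow, mul_pow, Real.sq_sqrt (by positivity)]
        rw [show ((2:ℝ)^(j+1))^2 = 4^(j+1) by rw [← pow_mul, mul_comm, pow_mul]; norm_num]
        ring
      rw [← e1, Real.sqrt_sq (by positivity)]
    rw [hg]
    simp only
    rw [h3, hsq]
  -- limit of the product
  have hlim : ∀ c : ℝ, 0 < c → Filter.Tendsto
      (fun N => ∏ j ∈ Finset.range N, Real.cosh (Real.sqrt (2*c) * τ / 2^(j+1)) ^ (-(δ/2)))
      atTop (nhds ((Real.sqrt (2*c) * τ / Real.sinh (Real.sqrt (2*c) * τ)) ^ (δ/2))) := by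
    intro c hc
    set s := Real.sqrt (2*c) * τ with hsdef
    have hs : 0 < s := by
      have : 0 < Real.sqrt (2*c) := Real.sqrt_pos.2 (by positivity)
      positivity
    have hsinh : 0 < Real.sinh s := Real.sinh_pos_iff.2 hs
    have hratio : (0:ℝ) < Real.sinh s / s := by positivity
    have h1 : ∀ N, (∏ j ∈ Finset.range N, Real.cosh (s / 2^(j+1)) ^ (-(δ/2)))
        = (∏ j ∈ Finset.range N, Real.cosh (s / 2^(j+1))) ^ (-(δ/2)) :=
      fun N => Real.finset_prod_rpow _ _ (fun j _ => (Real.cosh_pos _).le) _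
    have h2 : Filter.Tendsto (fun N => (∏ j ∈ Finset.range N, Real.cosh (s / 2^(j+1))) ^ (-(δ/2)))
        atTop (nhds ((Real.sinh s / s) ^ (-(δ/2)))) := by
      exact ((Real.continuousAt_rpow_const _ _ (Or.inl hratio.ne')).tendsto.comp
        (aux_cosh_prod_tendsto s hs))
    have h3 : (Real.sinh s / s) ^ (-(δ/2)) = (s / Real.sinh s) ^ (δ/2) := by
      rw [Real.rpow_neg hratio.le, ← Real.inv_rpow (by positivity), inv_div]
    have h4 : ∀ j : ℕ, Real.sqrt (2*c) * τ / 2^(j+1) = s / 2^(j+1) := fun j => rfl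
    simp only [h4, h1]
    rw [← h3]
    exact h2
  -- key convergence of the integrals of partial sums
  have hkey : ∀ c : ℝ, 0 < c → Filter.Tendsto (fun N => ∫ ω, Real.exp (-c * S N ω) ∂μ)
      atTop (nhds ((Real.sqrt (2*c) * τ / Real.sinh (Real.sqrt (2*c) * τ)) ^ (δ/2))) := by
    intro c hc
    have := hlim c hc
    refine this.congr fun N => ?_
    rw [hprod c hc N]
  -- the inf function
  set φ : ℝ → Ω → ℝ := fun c ω => ⨅ N, Real.exp (-c * S N ω) with hφ
  have hφmeas : ∀ c, Measurable (φ c) :=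
    fun c => Measurable.iInf (fun N => Real.measurable_exp.comp ((hSmeas N).const_mul (-c)))
  have hφnonneg : ∀ c ω, 0 ≤ φ c ω := fun c ω => le_ciInf fun N => (Real.exp_pos _).le
  have hbdd : ∀ c ω, BddBelow (Set.range fun N => Real.exp (-c * S N ω)) := by
    intro c ω
    refine ⟨0, ?_⟩
    rintro x ⟨N, rfl⟩
    exact (Real.exp_pos _).le
  have hφle1 : ∀ c ω, φ c ω ≤ 1 := by
    intro c ω
    refine le_trans (ciInf_le (hbdd c ω) 0) ?_
    simp [hS]
  have hφtendsto : ∀ c, 0 < c → ∀ ω, (∀ j, 0 ≤ Y j ω) →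
      Filter.Tendsto (fun N => Real.exp (-c * S N ω)) atTop (nhds (φ c ω)) := by
    intro c hc ω h
    refine tendsto_atTop_ciInf ?_ (hbdd c ω)
    intro N M hNM
    apply Real.exp_le_exp.2
    have := hSmono ω h hNM
    nlinarith
  have hφint : ∀ c, 0 < c → ∫ ω, φ c ω ∂μ
      = (Real.sqrt (2*c) * τ / Real.sinh (Real.sqrt (2*c) * τ)) ^ (δ/2) := by
    intro c hc
    have hdct := tendsto_integral_of_dominated_convergence (μ := μ)
      (F := fun N ω => Real.exp (-c * S N ω)) (f := φ c) (bound := fun _ => 1)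
      (fun N => (Real.measurable_exp.comp ((hSmeas N).const_mul (-c))).aestronglyMeasurable)
      (integrable_const 1)
      (by
        intro N
        filter_upwards [hSnonneg] with ω hω
        rw [Real.norm_eq_abs, Real.abs_exp]
        apply Real.exp_le_one_iff.2
        have := hω N
        nlinarith)
      (by filter_upwards [hYnonneg] with ω hω using hφtendsto c hc ω hω)
    exact tendsto_nhds_unique hdct (hkey c hc)
  -- the convergence set
  set E := {ω | ∃ l, Filter.Tendsto (fun N => S N ω) atTop (nhds l)} with hE
  have hEmeas : MeasurableSet E := measurableSet_exists_tendsto (fun N => hSmeas N)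
  have hsumE : ∀ ω, (∀ j, 0 ≤ Y j ω) → ω ∈ E → Summable fun j => Y j ω := by
    rintro ω h ⟨l, hl⟩
    exact summable_of_sum_range_le h (fun N => (hSmono ω h).ge_of_tendsto hl N)
  have hφ_onE : ∀ c, 0 < c → ∀ ω, (∀ j, 0 ≤ Y j ω) → ω ∈ E →
      φ c ω = Real.exp (-c * ∑' j, Y j ω) := by
    intro c hc ω h hωE
    have hsum := hsumE ω h hωE
    have h5 : Filter.Tendsto (fun N => S N ω) atTop (nhds (∑' j, Y j ω)) :=
      hsum.hasSum.tendsto_sum_nat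
    have h6 : Filter.Tendsto (fun N => Real.exp (-c * S N ω)) atTop
        (nhds (Real.exp (-c * ∑' j, Y j ω))) :=
      (Real.continuous_exp.tendsto _).comp (h5.const_mul (-c))
    exact tendsto_nhds_unique (hφtendsto c hc ω h) h6
  have hφ_offE : ∀ c, 0 < c → ∀ ω, (∀ j, 0 ≤ Y j ω) → ω ∉ E → φ c ω = 0 := by
    intro c hc ω h hωE
    rcases tendsto_of_monotone (hSmono ω h) with hT | ⟨l, hl⟩
    · have h7 : Filter.Tendsto (fun N => -c * S N ω) atTop atBot :=
        (tendsto_const_mul_atBot_of_neg (by linarith)).2 hT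
      have h8 : Filter.Tendsto (fun N => Real.exp (-c * S N ω)) atTop (nhds 0) :=
        Real.tendsto_exp_atBot.comp h7
      exact tendsto_nhds_unique (hφtendsto c hc ω h) h8
    · exact absurd ⟨l, hl⟩ hωE
  -- the limit of the Laplace transforms as c → 0
  have hΛ : Filter.Tendsto (fun k : ℕ =>
      (Real.sqrt (2*(1/(k+1:ℝ))) * τ / Real.sinh (Real.sqrt (2*(1/(k+1:ℝ))) * τ)) ^ (δ/2))
      atTop (nhds 1) := by
    set sk : ℕ → ℝ := fun k => Real.sqrt (2*(1/(k+1:ℝ))) * τ with hsk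
    have hskpos : ∀ k, 0 < sk k := by
      intro k
      have : (0:ℝ) < Real.sqrt (2*(1/(k+1:ℝ))) := Real.sqrt_pos.2 (by positivity)
      positivity
    have hsk0 : Filter.Tendsto sk atTop (nhdsWithin 0 {0}ᶜ) := by
      apply tendsto_nhdsWithin_of_tendsto_nhds_of_eventually_within
      · have h1 : Filter.Tendsto (fun k : ℕ => 2*(1/(k+1:ℝ))) atTop (nhds 0) := by
          have := tendsto_one_div_add_atTop_nhds_zero_nat.const_mul (2:ℝ)
          simpa using this
        have h2 : Filter.Tendsto (fun k : ℕ => Real.sqrt (2*(1/(k+1:ℝ)))) atTop (nhds 0) := by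
          have h2' := (Real.continuous_sqrt.tendsto 0).comp h1
          rw [Real.sqrt_zero] at h2'
          exact h2'
        have h3 := h2.mul_const τ
        rw [zero_mul] at h3
        exact h3
      · filter_upwards with k
        exact (hskpos k).ne'
    have hA : Filter.Tendsto (fun k => Real.sinh (sk k) / sk k) atTop (nhds 1) :=
      aux_sinh_div.comp hsk0
    have hB : Filter.Tendsto (fun k => sk k / Real.sinh (sk k)) atTop (nhds 1) := by
      have := hA.inv₀ one_ne_zero
      simp only [inv_div, inv_one] at this
      exact this
    have hC := (Real.continuousAt_rpow_const 1 (δ/2) (Or.inl one_ne_zero)).tendsto.comp hB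
    rw [Function.comp_def, Real.one_rpow] at hC
    exact hC
  -- a.e. convergence of partial sums
  have hEae : ∀ᵐ ω ∂μ, ω ∈ E := by
    have hc0 : ∀ k : ℕ, (0:ℝ) < 1/(k+1:ℝ) := fun k => by positivity
    have hdct := tendsto_integral_of_dominated_convergence (μ := μ)
      (F := fun k ω => φ (1/(k+1:ℝ)) ω) (f := E.indicator (fun _ => (1:ℝ)))
      (bound := fun _ => 1)
      (fun k => (hφmeas _).aestronglyMeasurable)
      (integrable_const 1)
      (by
        intro k
        filter_upwards with ω
        rw [Real.norm_eq_abs, abs_of_nonneg (hφnonneg _ ω)]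
        exact hφle1 _ ω)
      (by
        filter_upwards [hYnonneg] with ω hω
        by_cases hωE : ω ∈ E
        · rw [Set.indicator_of_mem hωE]
          have hT0 : 0 ≤ ∑' j, Y j ω := tsum_nonneg fun j => hω j
          have heq : ∀ k : ℕ, φ (1/(k+1:ℝ)) ω = Real.exp (-(1/(k+1:ℝ)) * ∑' j, Y j ω) :=
            fun k => hφ_onE _ (hc0 k) ω hω hωE
          simp only [heq]
          have h1 : Filter.Tendsto (fun k : ℕ => -(1/(k+1:ℝ)) * ∑' j, Y j ω) atTop (nhds 0) := by
            have := (tendsto_one_div_add_atTop_nhds_zero_nat.neg).mul_const (∑' j, Y j ω)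
            simpa using this
          have := (Real.continuous_exp.tendsto 0).comp h1
          simpa [Function.comp_def] using this
        · rw [Set.indicator_of_notMem hωE]
          simp only [fun k : ℕ => hφ_offE _ (hc0 k) ω hω hωE]
          exact tendsto_const_nhds)
    have h9 : ∫ ω, E.indicator (fun _ => (1:ℝ)) ω ∂μ = (μ E).toReal := by
      rw [integral_indicator_const _ hEmeas]
      simp [measureReal_def]
    have h10 : Filter.Tendsto (fun k : ℕ => ∫ ω, φ (1/(k+1:ℝ)) ω ∂μ) atTop (nhds 1) := by
      refine hΛ.congr fun k => ?_
      rw [hφint _ (hc0 k)]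
    have h11 : (μ E).toReal = 1 := by
      have := tendsto_nhds_unique hdct h10
      rw [h9] at this
      exact this
    have h12 : μ E = 1 := (ENNReal.toReal_eq_one_iff _).1 h11
    have h13 : μ Eᶜ = 0 := by
      rw [measure_compl hEmeas (measure_ne_top μ _), h12, measure_univ, tsub_self]
    rw [ae_iff]
    simpa [Set.compl_def] using h13
  -- final step
  intro b hb
  have hdctb := tendsto_integral_of_dominated_convergence (μ := μ)
    (F := fun N ω => Real.exp (-b * S N ω)) (f := fun ω => Real.exp (-b * X2 ω))
    (bound := fun _ => 1)
    (fun N => (Real.measurable_exp.comp ((hSmeas N).const_mul (-b))).aestronglyMeasurable)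
    (integrable_const 1)
    (by
      intro N
      filter_upwards [hSnonneg] with ω hω
      rw [Real.norm_eq_abs, Real.abs_exp]
      apply Real.exp_le_one_iff.2
      have := hω N
      nlinarith)
    (by
      filter_upwards [hYnonneg, hEae] with ω hω hωE
      have hsum := hsumE ω hω hωE
      have h5 : Filter.Tendsto (fun N => S N ω) atTop (nhds (X2 ω)) := by
        rw [hX2 ω]
        exact hsum.hasSum.tendsto_sum_nat
      exact (Real.continuous_exp.tendsto _).comp (h5.const_mul (-b)))
  exact tendsto_nhds_unique hdctb (hkey b hb)
end
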